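/- Let z₁, z₂ ∈ W^{1,∞}([0,T];Z) and set γ(t) := ⟨D_zI(t,z₁(t)) − D_zI(t,z₂(t)), z₁(t) − z₂(t)⟩_{Z*,Z}. Then there exists a constant C > 0, depending only on the C^{2,1}_loc modulus of I and the W^{1,∞}([0,T];Z) norms of z₁ and z₂, such that for almost all t ∈ [0,T]: γ̇(t) ≤ C ‖z₁(t) − z₂(t)‖_Z² + 2 ⟨D_zI(t,z₁(t)) − D_zI(t,z₂(t)), z₁′(t) − z₂′(t)⟩_{Z*,Z}. -/

import Mathlib

open MeasureTheory
open scoped RealInnerProductSpace NNReal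

noncomputable section

namespace RIS

variable {Z V X : Type*}
  [NormedAddCommGroup Z] [InnerProductSpace ℝ Z] [CompleteSpace Z]
  [NormedAddCommGroup V] [InnerProductSpace ℝ V] [CompleteSpace V]
  [NormedAddCommGroup X] [NormedSpace ℝ X]

/-- The convex subdifferential of `R : V → ℝ` at `u`, as a subset of the dual `V →L[ℝ] ℝ`. -/
def subdiff (R : V → ℝ) (u : V) : Set (V →L[ℝ] ℝ) :=
  {ξ | ∀ v : V, R u + ξ (v - u) ≤ R v}

/-- The semilinear energy `I(t,z) = ½⟨Az,z⟩ + F(z) − ⟨ℓ(t), z⟩`. -/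
def energy (A : Z →L[ℝ] Z →L[ℝ] ℝ) (F : Z → ℝ) (ℓ : ℝ → V →L[ℝ] ℝ)
    (ι : Z →L[ℝ] V) (t : ℝ) (z : Z) : ℝ :=
  (1 / 2 : ℝ) * A z z + F z - ℓ t (ι z)

/-- `D_z I(t,z) = Az + D_zF(z) − ℓ(t)`, as an element of `Z*` (here `D_zF(z)` and `ℓ(t)`
are elements of `V*`, composed with the embedding `ι : Z ↪ V`). -/
def DI (A : Z →L[ℝ] Z →L[ℝ] ℝ) (DF : Z → V →L[ℝ] ℝ) (ℓ : ℝ → V →L[ℝ] ℝ)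
    (ι : Z →L[ℝ] V) (t : ℝ) (z : Z) : Z →L[ℝ] ℝ :=
  A z + (DF z).comp ι - (ℓ t).comp ι

/-- Local stability: `0 ∈ ∂R(0) + D_z I(t,z)`. -/
def LocStable (R : V → ℝ) (A : Z →L[ℝ] Z →L[ℝ] ℝ) (DF : Z → V →L[ℝ] ℝ)
    (ℓ : ℝ → V →L[ℝ] ℝ) (ι : Z →L[ℝ] V) (t : ℝ) (z : Z) : Prop :=
  ∃ ξ ∈ subdiff R 0, ξ.comp ι + DI A DF ℓ ι t z = 0

/-- The local incremental minimization scheme with step size `τ`: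
`z_{k+1}` minimizes `I(t_k, ·) + R(· − z_k)` over the ball `‖· − z_k‖_V ≤ τ`
and `t_{k+1} = min{t_k + τ − ‖z_{k+1} − z_k‖_V, T}`, starting from `t_0 = 0`, `z_0 = z₀`. -/
def Scheme (A : Z →L[ℝ] Z →L[ℝ] ℝ) (F : Z → ℝ) (R : V → ℝ) (ℓ : ℝ → V →L[ℝ] ℝ)
    (ι : Z →L[ℝ] V) (T τ : ℝ) (z₀ : Z) (t : ℕ → ℝ) (z : ℕ → Z) : Prop :=
  t 0 = 0 ∧ z 0 = z₀ ∧
    ∀ k : ℕ,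
      ‖ι (z (k + 1) - z k)‖ ≤ τ ∧
      (∀ w : Z, ‖ι (w - z k)‖ ≤ τ →
        energy A F ℓ ι (t k) (z (k + 1)) + R (ι (z (k + 1) - z k)) ≤
          energy A F ℓ ι (t k) w + R (ι (w - z k))) ∧
      t (k + 1) = min (t k + τ - ‖ι (z (k + 1) - z k)‖) T

/-- Standing assumptions on the data of the rate-independent system. -/
def StandingAssumptions (ι : Z →L[ℝ] V) (ιX : V →L[ℝ] X)
    (A : Z →L[ℝ] Z →L[ℝ] ℝ) (α : ℝ) (F : Z → ℝ) (DF : Z → V →L[ℝ] ℝ)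
    (D2F : Z → Z →L[ℝ] V →L[ℝ] ℝ) (R : V → ℝ) (ℓ : ℝ → V →L[ℝ] ℝ)
    (L T : ℝ) : Prop :=
  Function.Injective (ι : Z → V) ∧ DenseRange (ι : Z → V) ∧ (∀ w : Z, ‖ι w‖ ≤ ‖w‖) ∧
  Function.Injective (ιX : V → X) ∧
  (∀ z w : Z, A z w = A w z) ∧ 0 < α ∧ (∀ w : Z, α * ‖w‖ ^ 2 ≤ A w w) ∧
  (∀ w : Z, 0 ≤ F w) ∧
  (∀ w : Z, HasFDerivAt F ((DF w).comp ι) w) ∧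
  (∀ w : Z, HasFDerivAt DF (D2F w) w) ∧
  (∃ CF q : ℝ, 0 < CF ∧ 1 ≤ q ∧ ∀ w v : Z, ‖D2F w v‖ ≤ CF * (1 + ‖w‖ ^ q) * ‖v‖) ∧
  0 ≤ L ∧ LipschitzOnWith (Real.toNNReal L) ℓ (Set.Icc 0 T) ∧ 0 < T ∧
  ConvexOn ℝ Set.univ R ∧ LowerSemicontinuous R ∧ (∀ v : V, 0 ≤ R v) ∧
  (∀ (c : ℝ) (v : V), 0 ≤ c → R (c • v) = c * R v) ∧
  (∃ ρ₁ ρ₂ : ℝ, 0 < ρ₁ ∧ 0 < ρ₂ ∧ ∀ v : V, ρ₁ * ‖ιX v‖ ≤ R v ∧ R v ≤ ρ₂ * ‖v‖)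

/-- `κ`-uniform convexity of the energy: `⟨D²_zI(t,z)v,v⟩ ≥ κ‖v‖²_Z`, where
`D²_zI(t,z)[v,v] = ⟨Av,v⟩ + ⟨D²F(z)v, v⟩`. -/
def UniformlyConvex (A : Z →L[ℝ] Z →L[ℝ] ℝ) (D2F : Z → Z →L[ℝ] V →L[ℝ] ℝ)
    (ι : Z →L[ℝ] V) (κ : ℝ) : Prop :=
  0 < κ ∧ ∀ w v : Z, κ * ‖v‖ ^ 2 ≤ A v v + D2F w v (ι v)

/-- A differential solution of the rate-independent system: `y ∈ W^{1,1}(0,T;Z)`,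
`y(0) = z₀` and `0 ∈ ∂R(y'(t)) + D_zI(t, y(t))` for a.e. `t ∈ (0,T)`. -/
def IsDiffSol (A : Z →L[ℝ] Z →L[ℝ] ℝ) (DF : Z → V →L[ℝ] ℝ) (ℓ : ℝ → V →L[ℝ] ℝ)
    (R : V → ℝ) (ι : Z →L[ℝ] V) (T : ℝ) (z₀ : Z) (y : ℝ → Z) : Prop :=
  y 0 = z₀ ∧
  ∃ y' : ℝ → Z,
    IntervalIntegrable y' volume 0 T ∧
    (∀ s ∈ Set.Icc (0 : ℝ) T, y s = z₀ + ∫ r in (0 : ℝ)..s, y' r) ∧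
    (∀ᵐ s ∂(volume.restrict (Set.Ioo (0 : ℝ) T)),
      ∃ ξ ∈ subdiff R (ι (y' s)), ξ.comp ι + DI A DF ℓ ι s (y s) = 0)


open Filter Topology in
/-- A derivative of a Lipschitz function on `[0,T]` at an interior point is bounded by the
Lipschitz constant. -/
lemma lip_deriv_norm_le {T : ℝ} {f : ℝ → Z} {K : ℝ≥0}
    (hf : LipschitzOnWith K f (Set.Icc 0 T)) {s : ℝ} (hs : s ∈ Set.Ioo 0 T)
    {f' : Z} (h : HasDerivAt f f' s) : ‖f'‖ ≤ K := by
  have hd : Set.Ioo s T \ {s} = Set.Ioo s T := by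
    apply Set.diff_singleton_eq_self
    simp [lt_irrefl]
  have hslope : Filter.Tendsto (slope f s) (𝓝[Set.Ioo s T] s) (𝓝 f') := by
    have h2 := (h.hasDerivWithinAt (s := Set.Ioo s T))
    rw [hasDerivWithinAt_iff_tendsto_slope, hd] at h2
    exact h2
  have hne : (𝓝[Set.Ioo s T] s).NeBot := by
    rw [nhdsWithin_Ioo_eq_nhdsGT hs.2]; infer_instance
  refine le_of_tendsto hslope.norm ?_
  filter_upwards [self_mem_nhdsWithin] with y hy
  have hyIcc : y ∈ Set.Icc 0 T := ⟨le_of_lt (hs.1.trans hy.1), hy.2.le⟩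
  have hsIcc : s ∈ Set.Icc 0 T := ⟨hs.1.le, hs.2.le⟩
  have hdist := hf.dist_le_mul y hyIcc s hsIcc
  have hys : (0:ℝ) < y - s := sub_pos.2 hy.1
  rw [slope, vsub_eq_sub, norm_smul, norm_inv, Real.norm_eq_abs,
    abs_of_pos hys]
  rw [dist_eq_norm, dist_eq_norm] at hdist
  rw [inv_mul_le_iff₀ hys]
  calc ‖f y - f s‖ ≤ (K : ℝ) * ‖y - s‖ := hdist
    _ = (K : ℝ) * (y - s) := by rw [Real.norm_eq_abs, abs_of_pos hys]
    _ = (y - s) * (K : ℝ) := by ring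

/-- Off-diagonal bound for a symmetric bilinear form from a diagonal bound. -/
lemma polar_bound (B : Z → Z → ℝ) (M : ℝ) (hM : 0 ≤ M)
    (hadd : ∀ v₁ v₂ w, B (v₁ + v₂) w = B v₁ w + B v₂ w)
    (hsmul : ∀ (c : ℝ) (v w : Z), B (c • v) w = c * B v w)
    (hsym : ∀ v w, B v w = B w v)
    (hdiag : ∀ v, |B v v| ≤ M * ‖v‖ ^ 2) (v w : Z) :
    |B v w| ≤ M * ‖v‖ * ‖w‖ := by
  have hadd2 : ∀ v w₁ w₂, B v (w₁ + w₂) = B v w₁ + B v w₂ := fun v w₁ w₂ => by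
    rw [hsym, hadd, hsym w₁ v, hsym w₂ v]
  have hsmul2 : ∀ (c : ℝ) (v w : Z), B v (c • w) = c * B v w := fun c v w => by
    rw [hsym, hsmul, hsym]
  have hzero : ∀ w, B 0 w = 0 := fun w => by
    have := hsmul 0 0 w; simpa using this
  rcases eq_or_ne v 0 with rfl | hv
  · simp only [hzero, abs_zero, norm_zero]
    have : (0:ℝ) ≤ M * 0 * ‖w‖ := by simp
    simpa using this
  rcases eq_or_ne w 0 with rfl | hw
  · rw [hsym]
    simp only [hzero, abs_zero, norm_zero, mul_zero]
    exact le_refl 0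
  set x := (‖v‖⁻¹ : ℝ) • v with hxdef
  set y := (‖w‖⁻¹ : ℝ) • w with hydef
  have hxn : ‖x‖ = 1 := norm_smul_inv_norm hv
  have hyn : ‖y‖ = 1 := norm_smul_inv_norm hw
  have key : |B x y| ≤ M := by
    have e1 : B (x + y) (x + y) = B x x + 2 * B x y + B y y := by
      have h0 := hadd x y (x + y)
      have h1 := hadd2 x x y
      have h2 := hadd2 y x y
      have h3 := hsym y x
      linarith
    have e2 : B (x - y) (x - y) = B x x - 2 * B x y + B y y := by
      have hxy : x - y = x + (-1 : ℝ) • y := by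
        rw [neg_one_smul]; abel
      rw [hxy]
      have h0 := hadd x ((-1 : ℝ) • y) (x + (-1 : ℝ) • y)
      have h1 := hadd2 x x ((-1 : ℝ) • y)
      have h2 := hadd2 ((-1 : ℝ) • y) x ((-1 : ℝ) • y)
      have h3 := hsmul (-1 : ℝ) y x
      have h4 := hsmul (-1 : ℝ) y ((-1 : ℝ) • y)
      have h5 := hsmul2 (-1 : ℝ) x y
      have h6 := hsmul2 (-1 : ℝ) y y
      have h7 := hsym y x
      linarith
    have h1 := hdiag (x + y)
    have h2 := hdiag (x - y)
    have hp := parallelogram_law_with_norm ℝ x y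
    rw [hxn, hyn] at hp
    have hp2 : ‖x + y‖ ^ 2 + ‖x - y‖ ^ 2 = 4 := by nlinarith [hp]
    have hM4 : M * ‖x + y‖ ^ 2 + M * ‖x - y‖ ^ 2 = 4 * M := by
      rw [← mul_add, hp2]; ring
    rw [abs_le] at h1 h2 ⊢
    constructor <;> linarith [h1.1, h1.2, h2.1, h2.2, e1, e2, hM4]
  have hvx : B v w = ‖v‖ * ‖w‖ * B x y := by
    have h1 : B x y = (‖v‖⁻¹ * ‖w‖⁻¹) * B v w := by
      rw [hxdef, hydef, hsmul, hsmul2]; ring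
    have hvn : (‖v‖ : ℝ) ≠ 0 := norm_ne_zero_iff.2 hv
    have hwn : (‖w‖ : ℝ) ≠ 0 := norm_ne_zero_iff.2 hw
    rw [h1]; field_simp
  rw [hvx, abs_mul, abs_mul, abs_norm, abs_norm]
  calc ‖v‖ * ‖w‖ * |B x y| ≤ ‖v‖ * ‖w‖ * M := by
        apply mul_le_mul_of_nonneg_left key (by positivity)
    _ = M * ‖v‖ * ‖w‖ := by ring

/-- Symmetry of the second derivative of `F`. -/
lemma d2f_symm (ι : Z →L[ℝ] V) (F : Z → ℝ) (DF : Z → V →L[ℝ] ℝ)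
    (D2F : Z → Z →L[ℝ] V →L[ℝ] ℝ)
    (hDF : ∀ w : Z, HasFDerivAt F ((DF w).comp ι) w)
    (hD2F : ∀ w : Z, HasFDerivAt DF (D2F w) w)
    (x v w : Z) : D2F x v (ι w) = D2F x w (ι v) := by
  set Φ : (V →L[ℝ] ℝ) →L[ℝ] (Z →L[ℝ] ℝ) := (ContinuousLinearMap.compL ℝ Z V ℝ).flip ι with hΦ
  have hΦapp : ∀ g : V →L[ℝ] ℝ, Φ g = g.comp ι := fun g => rfl
  have hf : ∀ y, HasFDerivAt F (Φ (DF y)) y := fun y => by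
    rw [hΦapp]; exact hDF y
  have hx : HasFDerivAt (fun y => Φ (DF y)) (Φ.comp (D2F x)) x :=
    Φ.hasFDerivAt.comp x (hD2F x)
  have hsym := second_derivative_symmetric hf hx v w
  simpa [hΦapp] using hsym

set_option maxHeartbeats 1600000

/-- Appendix A, estimate for the error measure `γ`:
for `z₁, z₂ ∈ W^{1,∞}([0,T];Z)` and
`γ(t) = ⟨D_zI(t,z₁(t)) − D_zI(t,z₂(t)), z₁(t) − z₂(t)⟩`, there is a constant `C > 0`
such that for a.e. `t ∈ (0,T)` the derivative `γ̇(t)` exists and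
`γ̇(t) ≤ C‖z₁(t) − z₂(t)‖²_Z + 2⟨D_zI(t,z₁(t)) − D_zI(t,z₂(t)), z₁′(t) − z₂′(t)⟩`. -/
theorem statement16
    (ι : Z →L[ℝ] V)
    (hιinj : Function.Injective (ι : Z → V)) (hιdense : DenseRange (ι : Z → V))
    (hιnorm : ∀ w : Z, ‖ι w‖ ≤ ‖w‖)
    (A : Z →L[ℝ] Z →L[ℝ] ℝ) (hAsymm : ∀ z w : Z, A z w = A w z)
    (F : Z → ℝ) (DF : Z → V →L[ℝ] ℝ) (D2F : Z → Z →L[ℝ] V →L[ℝ] ℝ)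
    (hDF : ∀ w : Z, HasFDerivAt F ((DF w).comp ι) w)
    (hD2F : ∀ w : Z, HasFDerivAt DF (D2F w) w)
    (hC21 : ∀ r : ℝ, 0 < r → ∃ Cr : ℝ, 0 ≤ Cr ∧ ∀ z₁ z₂ v : Z,
      ‖z₁‖ ≤ r → ‖z₂‖ ≤ r →
      D2F z₁ v (ι v) - D2F z₂ v (ι v) ≤ Cr * ‖z₁ - z₂‖ * ‖v‖ ^ 2)
    (ℓ : ℝ → V →L[ℝ] ℝ) (L T : ℝ) (hT : 0 < T) (hL : 0 ≤ L)
    (hℓ : LipschitzOnWith (Real.toNNReal L) ℓ (Set.Icc 0 T))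
    (z₁ z₂ : ℝ → Z) (L₁ L₂ : ℝ≥0)
    (hz₁Lip : LipschitzOnWith L₁ z₁ (Set.Icc (0 : ℝ) T))
    (hz₂Lip : LipschitzOnWith L₂ z₂ (Set.Icc (0 : ℝ) T))
    (z₁' z₂' : ℝ → Z)
    (hz₁' : ∀ᵐ s ∂(volume.restrict (Set.Ioo (0 : ℝ) T)), HasDerivAt z₁ (z₁' s) s)
    (hz₂' : ∀ᵐ s ∂(volume.restrict (Set.Ioo (0 : ℝ) T)), HasDerivAt z₂ (z₂' s) s) :
    ∃ C : ℝ, 0 < C ∧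
      ∀ᵐ s ∂(volume.restrict (Set.Ioo (0 : ℝ) T)),
        ∃ g : ℝ,
          HasDerivAt (fun r : ℝ =>
            (DI A DF ℓ ι r (z₁ r) - DI A DF ℓ ι r (z₂ r)) (z₁ r - z₂ r)) g s ∧
          g ≤ C * ‖z₁ s - z₂ s‖ ^ 2 +
              2 * ((DI A DF ℓ ι s (z₁ s) - DI A DF ℓ ι s (z₂ s)) (z₁' s - z₂' s)) := by
  have hL12 : (0:ℝ) ≤ (L₁:ℝ) + (L₂:ℝ) := by positivity
  set r : ℝ := 2 * (‖z₁ 0‖ + ‖z₂ 0‖ + ((L₁:ℝ) + (L₂:ℝ)) * T) + 1 with hrdef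
  have hrpos : 0 < r := by positivity
  obtain ⟨Cr, hCr0, hCr⟩ := hC21 r hrpos
  refine ⟨2 * Cr * ((L₁:ℝ) + (L₂:ℝ)) + 1, by nlinarith, ?_⟩
  have hsymD2F := d2f_symm ι F DF D2F hDF hD2F
  filter_upwards [hz₁', hz₂', ae_restrict_mem measurableSet_Ioo] with s hd1 hd2 hs
  set u : Z := z₁ s - z₂ s with hudef
  set u' : Z := z₁' s - z₂' s with hu'def
  -- basic bounds
  have hsIcc : s ∈ Set.Icc (0:ℝ) T := ⟨hs.1.le, hs.2.le⟩
  have h0Icc : (0:ℝ) ∈ Set.Icc (0:ℝ) T := ⟨le_refl 0, hT.le⟩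
  have hn1 : ‖z₁ s‖ ≤ ‖z₁ 0‖ + (L₁:ℝ) * T := by
    have h := hz₁Lip.dist_le_mul s hsIcc 0 h0Icc
    rw [dist_eq_norm, dist_eq_norm] at h
    have hsT : ‖s - 0‖ ≤ T := by
      rw [sub_zero, Real.norm_eq_abs, abs_of_pos hs.1]; exact hs.2.le
    have h2 : ‖z₁ s - z₁ 0‖ ≤ (L₁:ℝ) * T := h.trans (by
      apply mul_le_mul_of_nonneg_left hsT (by positivity))
    have h3 : ‖z₁ s‖ - ‖z₁ 0‖ ≤ ‖z₁ s - z₁ 0‖ := norm_sub_norm_le _ _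
    linarith
  have hn2 : ‖z₂ s‖ ≤ ‖z₂ 0‖ + (L₂:ℝ) * T := by
    have h := hz₂Lip.dist_le_mul s hsIcc 0 h0Icc
    rw [dist_eq_norm, dist_eq_norm] at h
    have hsT : ‖s - 0‖ ≤ T := by
      rw [sub_zero, Real.norm_eq_abs, abs_of_pos hs.1]; exact hs.2.le
    have h2 : ‖z₂ s - z₂ 0‖ ≤ (L₂:ℝ) * T := h.trans (by
      apply mul_le_mul_of_nonneg_left hsT (by positivity))
    have h3 : ‖z₂ s‖ - ‖z₂ 0‖ ≤ ‖z₂ s - z₂ 0‖ := norm_sub_norm_le _ _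
    linarith
  have hTnn : (0:ℝ) ≤ T := hT.le
  have hr1 : ‖z₁ s‖ ≤ r := by
    have := norm_nonneg (z₂ 0)
    have h1 : (0:ℝ) ≤ (L₁:ℝ) * T := by positivity
    have h2 : (0:ℝ) ≤ (L₂:ℝ) * T := by positivity
    have h3 : (0:ℝ) ≤ ‖z₁ 0‖ := norm_nonneg _
    rw [hrdef]; nlinarith
  have hr2 : ‖z₂ s‖ ≤ r := by
    have := norm_nonneg (z₁ 0)
    have h1 : (0:ℝ) ≤ (L₁:ℝ) * T := by positivity
    have h2 : (0:ℝ) ≤ (L₂:ℝ) * T := by positivity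
    have h3 : (0:ℝ) ≤ ‖z₂ 0‖ := norm_nonneg _
    rw [hrdef]; nlinarith
  have hb1 : ‖z₁' s‖ ≤ (L₁:ℝ) := lip_deriv_norm_le hz₁Lip hs hd1
  have hb2 : ‖z₂' s‖ ≤ (L₂:ℝ) := lip_deriv_norm_le hz₂Lip hs hd2
  have hu'b : ‖u'‖ ≤ (L₁:ℝ) + (L₂:ℝ) := by
    rw [hu'def]
    have h3 := norm_sub_le (z₁' s) (z₂' s)
    linarith
  -- derivative of γ
  have hu : HasDerivAt (fun t => z₁ t - z₂ t) u' s := hd1.sub hd2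
  have hA1 : HasDerivAt (fun t => A (z₁ t)) (A (z₁' s)) s :=
    A.hasFDerivAt.comp_hasDerivAt s hd1
  have hA2 : HasDerivAt (fun t => A (z₂ t)) (A (z₂' s)) s :=
    A.hasFDerivAt.comp_hasDerivAt s hd2
  have hT1 : HasDerivAt (fun t => A (z₁ t) (z₁ t - z₂ t)) (A (z₁' s) u + A (z₁ s) u') s :=
    hA1.clm_apply hu
  have hT2 : HasDerivAt (fun t => A (z₂ t) (z₁ t - z₂ t)) (A (z₂' s) u + A (z₂ s) u') s :=
    hA2.clm_apply hu
  have hDF1 : HasDerivAt (fun t => DF (z₁ t)) (D2F (z₁ s) (z₁' s)) s :=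
    (hD2F (z₁ s)).comp_hasDerivAt s hd1
  have hDF2 : HasDerivAt (fun t => DF (z₂ t)) (D2F (z₂ s) (z₂' s)) s :=
    (hD2F (z₂ s)).comp_hasDerivAt s hd2
  have hιu : HasDerivAt (fun t => ι (z₁ t - z₂ t)) (ι u') s :=
    ι.hasFDerivAt.comp_hasDerivAt s hu
  have hT3 : HasDerivAt (fun t => DF (z₁ t) (ι (z₁ t - z₂ t)))
      (D2F (z₁ s) (z₁' s) (ι u) + DF (z₁ s) (ι u')) s := hDF1.clm_apply hιu
  have hT4 : HasDerivAt (fun t => DF (z₂ t) (ι (z₁ t - z₂ t)))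
      (D2F (z₂ s) (z₂' s) (ι u) + DF (z₂ s) (ι u')) s := hDF2.clm_apply hιu
  set g₀ : ℝ := (A (z₁' s) u + A (z₁ s) u' - (A (z₂' s) u + A (z₂ s) u')) +
      ((D2F (z₁ s) (z₁' s) (ι u) + DF (z₁ s) (ι u')) -
        (D2F (z₂ s) (z₂' s) (ι u) + DF (z₂ s) (ι u'))) with hg₀def
  have hγ : HasDerivAt (fun t => (A (z₁ t) (z₁ t - z₂ t) - A (z₂ t) (z₁ t - z₂ t)) +
      (DF (z₁ t) (ι (z₁ t - z₂ t)) - DF (z₂ t) (ι (z₁ t - z₂ t)))) g₀ s :=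
    (hT1.sub hT2).add (hT3.sub hT4)
  have hfun : (fun t : ℝ =>
      (DI A DF ℓ ι t (z₁ t) - DI A DF ℓ ι t (z₂ t)) (z₁ t - z₂ t)) =
      (fun t => (A (z₁ t) (z₁ t - z₂ t) - A (z₂ t) (z₁ t - z₂ t)) +
      (DF (z₁ t) (ι (z₁ t - z₂ t)) - DF (z₂ t) (ι (z₁ t - z₂ t)))) := by
    funext t
    simp only [DI, ContinuousLinearMap.sub_apply, ContinuousLinearMap.add_apply,
      ContinuousLinearMap.comp_apply]
    ring
  refine ⟨g₀, by rw [hfun]; exact hγ, ?_⟩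
  -- the mean value estimate for DF
  have hmid : ∀ θ : ℝ, θ ∈ Set.Icc (0:ℝ) 1 → ‖z₂ s + θ • u‖ ≤ r := by
    intro θ hθ
    have h1 : ‖θ • u‖ ≤ ‖u‖ := by
      rw [norm_smul, Real.norm_eq_abs, abs_of_nonneg hθ.1]
      nlinarith [norm_nonneg u, hθ.2]
    have h2 : ‖u‖ ≤ ‖z₁ s‖ + ‖z₂ s‖ := norm_sub_le _ _
    have h3 : ‖z₂ s + θ • u‖ ≤ ‖z₂ s‖ + ‖θ • u‖ := norm_add_le _ _
    have h1' : (0:ℝ) ≤ (L₁:ℝ) * T := by positivity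
    have h2' : (0:ℝ) ≤ (L₂:ℝ) * T := by positivity
    have h3' : (0:ℝ) ≤ ‖z₁ 0‖ := norm_nonneg _
    have h4' : (0:ℝ) ≤ ‖z₂ 0‖ := norm_nonneg _
    rw [hrdef]; nlinarith
  -- the polarized C^{2,1} bound
  have habs : ∀ a b : Z, ‖a‖ ≤ r → ‖b‖ ≤ r → ∀ v w : Z,
      |D2F a v (ι w) - D2F b v (ι w)| ≤ Cr * ‖a - b‖ * ‖v‖ * ‖w‖ := by
    intro a b ha hb v w
    have h1 : ∀ v₁ v₂ w : Z, (D2F a (v₁ + v₂) (ι w) - D2F b (v₁ + v₂) (ι w)) =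
        (D2F a v₁ (ι w) - D2F b v₁ (ι w)) + (D2F a v₂ (ι w) - D2F b v₂ (ι w)) := by
      intro v₁ v₂ w
      simp only [map_add, ContinuousLinearMap.add_apply]
      ring
    have h2 : ∀ (c : ℝ) (v w : Z), (D2F a (c • v) (ι w) - D2F b (c • v) (ι w)) =
        c * (D2F a v (ι w) - D2F b v (ι w)) := by
      intro c v w
      simp only [_root_.map_smul, ContinuousLinearMap.smul_apply, smul_eq_mul]
      ring
    have h3 : ∀ v w : Z, (D2F a v (ι w) - D2F b v (ι w)) =
        (D2F a w (ι v) - D2F b w (ι v)) := by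
      intro v w
      rw [hsymD2F a v w, hsymD2F b v w]
    have h4 : ∀ v : Z, |D2F a v (ι v) - D2F b v (ι v)| ≤ (Cr * ‖a - b‖) * ‖v‖ ^ 2 := by
      intro v
      rw [abs_le]
      constructor
      · have h := hCr b a v hb ha
        rw [norm_sub_rev b a] at h
        nlinarith [h]
      · have h := hCr a b v ha hb
        nlinarith [h]
    exact polar_bound (fun v w => D2F a v (ι w) - D2F b v (ι w)) (Cr * ‖a - b‖)
      (by positivity) h1 h2 h3 h4 v w
  have key2 : |DF (z₁ s) (ι u') - DF (z₂ s) (ι u') - D2F (z₁ s) u (ι u')| ≤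
      Cr * ‖u‖ * ‖u‖ * ‖u'‖ := by
    set ψ : ℝ → ℝ := fun θ => DF (z₂ s + θ • u) (ι u') - θ * (D2F (z₁ s) u (ι u'))
      with hψdef
    set ψ' : ℝ → ℝ := fun θ => D2F (z₂ s + θ • u) u (ι u') - D2F (z₁ s) u (ι u')
      with hψ'def
    have hψd : ∀ θ ∈ Set.Icc (0:ℝ) 1, HasDerivWithinAt ψ (ψ' θ) (Set.Icc 0 1) θ := by
      intro θ _
      have h1 : HasDerivAt (fun θ : ℝ => z₂ s + θ • u) u θ := by
        have := ((hasDerivAt_id θ).smul_const u).const_add (z₂ s)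
        simpa using this
      have h2 : HasDerivAt (fun θ : ℝ => DF (z₂ s + θ • u)) (D2F (z₂ s + θ • u) u) θ :=
        (hD2F (z₂ s + θ • u)).comp_hasDerivAt θ h1
      have h3 : HasDerivAt (fun θ : ℝ => DF (z₂ s + θ • u) (ι u'))
          (D2F (z₂ s + θ • u) u (ι u')) θ := by
        have := h2.clm_apply (hasDerivAt_const θ (ι u'))
        simpa using this
      have h4 : HasDerivAt (fun θ : ℝ => θ * (D2F (z₁ s) u (ι u')))
          (D2F (z₁ s) u (ι u')) θ := hasDerivAt_mul_const _
      exact (h3.sub h4).hasDerivWithinAt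
    have hψb : ∀ θ ∈ Set.Icc (0:ℝ) 1, ‖ψ' θ‖ ≤ Cr * ‖u‖ * ‖u‖ * ‖u'‖ := by
      intro θ hθ
      have hdiff : z₂ s + θ • u - z₁ s = (θ - 1) • u := by
        rw [hudef]; module
      have hnd : ‖z₂ s + θ • u - z₁ s‖ ≤ ‖u‖ := by
        rw [hdiff, norm_smul, Real.norm_eq_abs]
        have : |θ - 1| ≤ 1 := by
          rw [abs_le]; constructor <;> linarith [hθ.1, hθ.2]
        nlinarith [norm_nonneg u]
      have h := habs (z₂ s + θ • u) (z₁ s) (hmid θ hθ) hr1 u u'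
      rw [hψ'def, Real.norm_eq_abs]
      refine le_trans h ?_
      nlinarith [hnd, norm_nonneg u, norm_nonneg u',
        mul_nonneg (mul_nonneg hCr0 (norm_nonneg u)) (norm_nonneg u')]
    have hmvt := Convex.norm_image_sub_le_of_norm_hasDerivWithin_le hψd hψb
      (convex_Icc 0 1) (Set.left_mem_Icc.2 zero_le_one) (Set.right_mem_Icc.2 zero_le_one)
    have hψ1 : ψ 1 = DF (z₁ s) (ι u') - D2F (z₁ s) u (ι u') := by
      have h1 : z₂ s + u = z₁ s := by rw [hudef]; abel
      rw [hψdef]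
      simp only [one_smul, h1, one_mul]
    have hψ0 : ψ 0 = DF (z₂ s) (ι u') := by
      rw [hψdef]; simp
    rw [hψ1, hψ0] at hmvt
    have : ‖(1:ℝ) - 0‖ = 1 := by norm_num
    rw [this, mul_one] at hmvt
    have heq : |DF (z₁ s) (ι u') - DF (z₂ s) (ι u') - D2F (z₁ s) u (ι u')| =
        ‖DF (z₁ s) (ι u') - D2F (z₁ s) u (ι u') - DF (z₂ s) (ι u')‖ := by
      rw [Real.norm_eq_abs]; ring_nf
    rw [heq]
    exact hmvt
  have key3 : D2F (z₁ s) (z₂' s) (ι u) - D2F (z₂ s) (z₂' s) (ι u) ≤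
      Cr * ‖u‖ * ‖z₂' s‖ * ‖u‖ := by
    have h := habs (z₁ s) (z₂ s) hr1 hr2 (z₂' s) u
    rw [abs_le] at h
    exact h.2.trans_eq (by rw [hudef])
  -- algebraic identities
  have eA1 : A (z₁' s) u - A (z₂' s) u = A u u' := by
    have h1 : A (z₁' s) u - A (z₂' s) u = A u' u := by
      simp only [hu'def, map_sub, ContinuousLinearMap.sub_apply]
    rw [h1, hAsymm]
  have eA2 : A (z₁ s) u' - A (z₂ s) u' = A u u' := by
    simp only [hudef, map_sub, ContinuousLinearMap.sub_apply]
  have eD : D2F (z₁ s) (z₁' s) (ι u) - D2F (z₂ s) (z₂' s) (ι u) =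
      D2F (z₁ s) u (ι u') + (D2F (z₁ s) (z₂' s) (ι u) - D2F (z₂ s) (z₂' s) (ι u)) := by
    have h1 : D2F (z₁ s) (z₁' s) (ι u) - D2F (z₁ s) (z₂' s) (ι u) =
        D2F (z₁ s) u' (ι u) := by
      simp only [hu'def, map_sub, ContinuousLinearMap.sub_apply]
    have h2 : D2F (z₁ s) u' (ι u) = D2F (z₁ s) u (ι u') := hsymD2F _ _ _
    linarith [h1, h2]
  have hrhs : (DI A DF ℓ ι s (z₁ s) - DI A DF ℓ ι s (z₂ s)) (z₁' s - z₂' s) =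
      (A (z₁ s) u' - A (z₂ s) u') + (DF (z₁ s) (ι u') - DF (z₂ s) (ι u')) := by
    simp only [DI, ContinuousLinearMap.sub_apply, ContinuousLinearMap.add_apply,
      ContinuousLinearMap.comp_apply, hu'def]
    ring
  rw [hrhs, eA2]
  rw [hg₀def]
  have k2 := (abs_le.1 key2).1
  have hm1 : Cr * ‖u‖ * ‖u‖ * ‖u'‖ ≤ Cr * ((L₁:ℝ) + (L₂:ℝ)) * ‖u‖ ^ 2 := by
    nlinarith [mul_nonneg (mul_nonneg hCr0 (norm_nonneg u)) (norm_nonneg u), hu'b,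
      norm_nonneg u']
  have hm2 : Cr * ‖u‖ * ‖z₂' s‖ * ‖u‖ ≤ Cr * ((L₁:ℝ) + (L₂:ℝ)) * ‖u‖ ^ 2 := by
    nlinarith [mul_nonneg (mul_nonneg hCr0 (norm_nonneg u)) (norm_nonneg u), hb2,
      norm_nonneg (z₂' s), NNReal.coe_nonneg L₁]
  have husq : (0:ℝ) ≤ ‖u‖ ^ 2 := sq_nonneg _
  have hgoalnorm : ‖z₁ s - z₂ s‖ = ‖u‖ := by rw [hudef]
  rw [hgoalnorm]
  linarith [eA1, eD, key3, k2, hm1, hm2]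

end RIS
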